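/- arXiv:1806.04712 — 4 statements merged into one kernel-verified Lean document; each statement's English description precedes it below -/
import Mathlib

section
/- Let U ⊆ ℝ² be open, m a positive integer, f : U → ℂ continuous, and define Φ : U × ℝ → ℝ by Φ(x,θ) = Re f(x)·cos(mθ) + Im f(x)·sin(mθ). Let k be an integer, let U₁ be a nonempty connected subset of U × {kπ/(2m)} and U₂ a nonempty connected subset of U × {(k+1)π/(2m)}, and suppose Φ > 0 on U₁ ∪ U₂ and that there exists x₀ ∈ U with (x₀, kπ/(2m)) ∈ U₁ and (x₀, (k+1)π/(2m)) ∈ U₂. Then U₁ ∪ U₂ is contained in a single connected component of {(x,θ) ∈ U × ℝ : Φ(x,θ) ≠ 0}. -/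
/-!
Along the vertical segment `{x₀} × [kπ/(2m), (k+1)π/(2m)]` the function `θ ↦ Φ(x₀, θ)` is a
sinusoid in `mθ` over an interval of length at most `π/2`; it is positive at both ends, hence on
the whole segment. The segment therefore joins the preconnected sets `U₁` and `U₂` inside
`{Φ ≠ 0}`.
-/

open Real Set

lemma sinusoid_pos_of_mem_Icc {a b ψ₁ ψ₂ φ : ℝ} (hlen : ψ₂ - ψ₁ < π)
    (h₁ : 0 < a * cos ψ₁ + b * sin ψ₁) (h₂ : 0 < a * cos ψ₂ + b * sin ψ₂)
    (hφ : φ ∈ Icc ψ₁ ψ₂) : 0 < a * cos φ + b * sin φ := by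
  obtain rfl | hs := hφ.1.eq_or_lt
  · exact h₁
  have key : sin (ψ₂ - ψ₁) * (a * cos φ + b * sin φ) =
      sin (ψ₂ - φ) * (a * cos ψ₁ + b * sin ψ₁) + sin (φ - ψ₁) * (a * cos ψ₂ + b * sin ψ₂) := by
    simp only [sin_sub]
    ring
  have hsin_t : 0 ≤ sin (ψ₂ - φ) := sin_nonneg_of_nonneg_of_le_pi (by linarith [hφ.2]) (by linarith)
  have hsin_s : 0 < sin (φ - ψ₁) := sin_pos_of_pos_of_lt_pi (by linarith) (by linarith [hφ.2])
  have hsin_L : 0 ≤ sin (ψ₂ - ψ₁) := sin_nonneg_of_nonneg_of_le_pi (by linarith [hφ.2]) hlen.le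
  have hprod : 0 < sin (ψ₂ - ψ₁) * (a * cos φ + b * sin φ) := by
    rw [key]
    positivity
  exact pos_of_mul_pos_right hprod hsin_L

lemma union_subset_connectedComponentIn_of_bridge {X : Type*} [TopologicalSpace X]
    {S A B C : Set X} (hA : IsPreconnected A) (hB : IsPreconnected B) (hC : IsPreconnected C)
    (hAC : (A ∩ C).Nonempty) (hCB : (C ∩ B).Nonempty) (hS : A ∪ C ∪ B ⊆ S) {x : X}
    (hx : x ∈ A) : A ∪ B ⊆ connectedComponentIn S x := by
  have hACB : IsPreconnected (A ∪ C ∪ B) := by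
    refine (hA.union' hAC hC).union' ?_ hB
    obtain ⟨y, hyC, hyB⟩ := hCB
    exact ⟨y, Or.inr hyC, hyB⟩
  refine Subset.trans ?_ (hACB.subset_connectedComponentIn (Or.inl (Or.inl hx)) hS)
  exact union_subset (subset_union_left.trans subset_union_left) subset_union_right

theorem stmt5_general (U : Set (ℝ × ℝ)) (m : ℕ)
    (f : ℝ × ℝ → ℂ) (k : ℤ)
    (U₁ U₂ : Set ((ℝ × ℝ) × ℝ))
    (hU₁sub : U₁ ⊆ U ×ˢ ({(k : ℝ) * Real.pi / (2 * m)} : Set ℝ))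
    (hU₂sub : U₂ ⊆ U ×ˢ ({((k : ℝ) + 1) * Real.pi / (2 * m)} : Set ℝ))
    (hU₁conn : IsConnected U₁) (hU₂conn : IsConnected U₂)
    (hpos : ∀ p ∈ U₁ ∪ U₂,
      0 < (f p.1).re * Real.cos (m * p.2) + (f p.1).im * Real.sin (m * p.2))
    (x₀ : ℝ × ℝ)
    (hx₀₁ : (x₀, (k : ℝ) * Real.pi / (2 * m)) ∈ U₁)
    (hx₀₂ : (x₀, ((k : ℝ) + 1) * Real.pi / (2 * m)) ∈ U₂) :
    ∃ p ∈ {q : (ℝ × ℝ) × ℝ | q.1 ∈ U ∧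
        (f q.1).re * Real.cos (m * q.2) + (f q.1).im * Real.sin (m * q.2) ≠ 0},
      U₁ ∪ U₂ ⊆ connectedComponentIn
        {q : (ℝ × ℝ) × ℝ | q.1 ∈ U ∧
          (f q.1).re * Real.cos (m * q.2) + (f q.1).im * Real.sin (m * q.2) ≠ 0} p := by
  set θ₁ : ℝ := (k : ℝ) * π / (2 * m)
  set θ₂ : ℝ := ((k : ℝ) + 1) * π / (2 * m)
  have hθ : θ₁ ≤ θ₂ := by
    have : θ₂ - θ₁ = π / (2 * m) := by ring
    linarith [show 0 ≤ π / (2 * m) by positivity]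
  -- `m * (π / (2m)) = π / 2`, except that it is `0` when `m = 0`
  have hlen : m * θ₂ - m * θ₁ < π := by
    have : m * θ₂ - m * θ₁ = (m / m : ℝ) * (π / 2) := by ring
    nlinarith [div_self_le_one (m : ℝ), pi_pos]
  have hsegment : ∀ θ ∈ Icc θ₁ θ₂,
      0 < (f x₀).re * cos (m * θ) + (f x₀).im * sin (m * θ) := fun θ hθ ↦
    sinusoid_pos_of_mem_Icc hlen (hpos _ (Or.inl hx₀₁)) (hpos _ (Or.inr hx₀₂))
      ⟨by gcongr; exact hθ.1, by gcongr; exact hθ.2⟩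
  have hx₀ : x₀ ∈ U := (hU₁sub hx₀₁).1
  refine ⟨(x₀, θ₁), ⟨hx₀, (hpos _ (Or.inl hx₀₁)).ne'⟩,
    union_subset_connectedComponentIn_of_bridge (C := {x₀} ×ˢ Icc θ₁ θ₂)
      hU₁conn.isPreconnected hU₂conn.isPreconnected
      (isPreconnected_singleton.prod isPreconnected_Icc)
      ⟨_, hx₀₁, rfl, left_mem_Icc.2 hθ⟩ ⟨_, ⟨rfl, right_mem_Icc.2 hθ⟩, hx₀₂⟩ ?_ hx₀₁⟩
  rintro ⟨x, θ⟩ ((hp | ⟨rfl, hθ⟩) | hp)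
  · exact ⟨(hU₁sub hp).1, (hpos _ (Or.inl hp)).ne'⟩
  · exact ⟨hx₀, (hsegment θ hθ).ne'⟩
  · exact ⟨(hU₂sub hp).1, (hpos _ (Or.inr hp)).ne'⟩

/-- Let `U ⊆ ℝ²` be open, `m ≥ 1`, `f : U → ℂ` continuous, and
`Φ(x,θ) = Re f(x) cos(mθ) + Im f(x) sin(mθ)`.  If `U₁`, `U₂` are nonempty connected
subsets of `U × {kπ/(2m)}` and `U × {(k+1)π/(2m)}` respectively on which `Φ > 0`, and
there is `x₀ ∈ U` with `(x₀, kπ/(2m)) ∈ U₁` and `(x₀, (k+1)π/(2m)) ∈ U₂`, then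
`U₁ ∪ U₂` lies in a single connected component of `{(x,θ) ∈ U × ℝ : Φ(x,θ) ≠ 0}`. -/
theorem stmt5 (U : Set (ℝ × ℝ)) (hU : IsOpen U) (m : ℕ) (hm : 0 < m)
    (f : ℝ × ℝ → ℂ) (hf : ContinuousOn f U) (k : ℤ)
    (U₁ U₂ : Set ((ℝ × ℝ) × ℝ))
    (hU₁sub : U₁ ⊆ U ×ˢ ({(k : ℝ) * Real.pi / (2 * m)} : Set ℝ))
    (hU₂sub : U₂ ⊆ U ×ˢ ({((k : ℝ) + 1) * Real.pi / (2 * m)} : Set ℝ))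
    (hU₁conn : IsConnected U₁) (hU₂conn : IsConnected U₂)
    (hpos : ∀ p ∈ U₁ ∪ U₂,
      0 < (f p.1).re * Real.cos (m * p.2) + (f p.1).im * Real.sin (m * p.2))
    (x₀ : ℝ × ℝ) (hx₀ : x₀ ∈ U)
    (hx₀₁ : (x₀, (k : ℝ) * Real.pi / (2 * m)) ∈ U₁)
    (hx₀₂ : (x₀, ((k : ℝ) + 1) * Real.pi / (2 * m)) ∈ U₂) :
    ∃ p ∈ {q : (ℝ × ℝ) × ℝ | q.1 ∈ U ∧
        (f q.1).re * Real.cos (m * q.2) + (f q.1).im * Real.sin (m * q.2) ≠ 0},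
      U₁ ∪ U₂ ⊆ connectedComponentIn
        {q : (ℝ × ℝ) × ℝ | q.1 ∈ U ∧
          (f q.1).re * Real.cos (m * q.2) + (f q.1).im * Real.sin (m * q.2) ≠ 0} p :=
  stmt5_general U m f k U₁ U₂ hU₁sub hU₂sub hU₁conn hU₂conn hpos x₀ hx₀₁ hx₀₂
end

section
/- Let U ⊆ ℝ² be open, m a positive integer, f : U → ℂ continuous, and define Φ : U × ℝ → ℝ by Φ(x,θ) = Re f(x)·cos(mθ) + Im f(x)·sin(mθ). Assume that the zero set {x ∈ U : Re f(x) = 0} and the zero set {x ∈ U : Im f(x) = 0} both have empty interior in U. Then every connected component of {(x,θ) ∈ U × ℝ : Φ(x,θ) ≠ 0} contains a point whose second coordinate equals kπ/(2m) for some integer k. -/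
private lemma zero_unique (r i : ℝ) (m : ℕ) (hm : 0 < m) (θ₁ θ₂ : ℝ)
    (hne : r ≠ 0 ∨ i ≠ 0)
    (h1 : r * Real.cos (m * θ₁) + i * Real.sin (m * θ₁) = 0)
    (h2 : r * Real.cos (m * θ₂) + i * Real.sin (m * θ₂) = 0)
    (hd : |θ₂ - θ₁| < Real.pi / m) : θ₁ = θ₂ := by
  have hmR : (0:ℝ) < m := by exact_mod_cast hm
  have e1 : r * Real.sin ((m:ℝ) * θ₂ - m * θ₁) = 0 := by
    rw [Real.sin_sub]
    linear_combination Real.sin ((m:ℝ) * θ₂) * h1 - Real.sin ((m:ℝ) * θ₁) * h2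
  have e2 : i * Real.sin ((m:ℝ) * θ₂ - m * θ₁) = 0 := by
    rw [Real.sin_sub]
    linear_combination Real.cos ((m:ℝ) * θ₁) * h2 - Real.cos ((m:ℝ) * θ₂) * h1
  have hs : Real.sin ((m:ℝ) * θ₂ - m * θ₁) = 0 := by
    rcases hne with h | h
    · exact (mul_eq_zero.1 e1).resolve_left h
    · exact (mul_eq_zero.1 e2).resolve_left h
  obtain ⟨n, hn⟩ := Real.sin_eq_zero_iff.1 hs
  have hnabs : |(n:ℝ)| * Real.pi < Real.pi := by
    have : |(n:ℝ) * Real.pi| = |(m:ℝ) * (θ₂ - θ₁)| := by rw [hn]; ring_nf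
    rw [abs_mul, abs_of_pos Real.pi_pos] at this
    rw [this, abs_mul, abs_of_pos hmR]
    calc (m:ℝ) * |θ₂ - θ₁| < m * (Real.pi / m) := by
          exact mul_lt_mul_of_pos_left hd hmR
      _ = Real.pi := by field_simp
  have hn0 : n = 0 := by
    by_contra h
    have : (1:ℝ) ≤ |(n:ℝ)| := by
      have := Int.one_le_abs (by omega : n ≠ 0)
      exact_mod_cast this
    nlinarith [Real.pi_pos]
  have : (m:ℝ) * θ₂ - m * θ₁ = 0 := by rw [← hn, hn0]; simp
  have : (m:ℝ) * (θ₂ - θ₁) = 0 := by linarith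
  have := mul_eq_zero.1 this
  rcases this with h | h
  · exact absurd h (ne_of_gt hmR)
  · linarith

/-- Let `U ⊆ ℝ²` be open, `m ≥ 1`, `f : U → ℂ` continuous, and
`Φ(x,θ) = Re f(x) cos(mθ) + Im f(x) sin(mθ)`.  If the zero sets of `Re f` and of
`Im f` inside `U` have empty interior, then every connected component of
`{(x,θ) ∈ U × ℝ : Φ(x,θ) ≠ 0}` contains a point whose second coordinate is `kπ/(2m)`
for some integer `k`. -/
theorem stmt6 (U : Set (ℝ × ℝ)) (hU : IsOpen U) (m : ℕ) (hm : 0 < m)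
    (f : ℝ × ℝ → ℂ) (hf : ContinuousOn f U)
    (hre : interior {x : ℝ × ℝ | x ∈ U ∧ (f x).re = 0} = ∅)
    (him : interior {x : ℝ × ℝ | x ∈ U ∧ (f x).im = 0} = ∅) :
    ∀ p ∈ {q : (ℝ × ℝ) × ℝ | q.1 ∈ U ∧
        (f q.1).re * Real.cos (m * q.2) + (f q.1).im * Real.sin (m * q.2) ≠ 0},
      ∃ q ∈ connectedComponentIn
          {q : (ℝ × ℝ) × ℝ | q.1 ∈ U ∧
            (f q.1).re * Real.cos (m * q.2) + (f q.1).im * Real.sin (m * q.2) ≠ 0} p,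
        ∃ k : ℤ, q.2 = (k : ℝ) * Real.pi / (2 * m) := by
  intro p hp
  set S : Set ((ℝ × ℝ) × ℝ) := {q : (ℝ × ℝ) × ℝ | q.1 ∈ U ∧
      (f q.1).re * Real.cos (m * q.2) + (f q.1).im * Real.sin (m * q.2) ≠ 0} with hS
  obtain ⟨x, θ₀⟩ := p
  obtain ⟨hxU, hΦ⟩ := hp
  set r := (f x).re
  set i := (f x).im
  have hne : r ≠ 0 ∨ i ≠ 0 := by
    by_contra h
    push_neg at h
    apply hΦ
    simp [h.1, h.2]
  have hmR : (0:ℝ) < m := by exact_mod_cast hm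
  have h2m : (0:ℝ) < 2 * m := by positivity
  have hπ := Real.pi_pos
  set k0 : ℤ := ⌊θ₀ * (2 * m) / Real.pi⌋ with hk0
  set a : ℝ := (k0 : ℝ) * Real.pi / (2 * m) with hadef
  set b : ℝ := ((k0 : ℝ) + 1) * Real.pi / (2 * m) with hbdef
  have ha : a ≤ θ₀ := by
    have h1 : (k0 : ℝ) ≤ θ₀ * (2 * m) / Real.pi := Int.floor_le _
    rw [hadef, div_le_iff₀ h2m]
    rw [le_div_iff₀ hπ] at h1
    nlinarith
  have hb : θ₀ < b := by
    have h1 : θ₀ * (2 * m) / Real.pi < (k0 : ℝ) + 1 := Int.lt_floor_add_one _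
    rw [hbdef, lt_div_iff₀ h2m]
    rw [div_lt_iff₀ hπ] at h1
    nlinarith
  have hba : b - a = Real.pi / (2 * m) := by
    rw [hadef, hbdef]; field_simp; ring
  have hlt : Real.pi / (2 * m) < Real.pi / m := by
    rw [div_lt_div_iff₀ h2m hmR]; nlinarith
  -- segment lemma
  have seg : ∀ c d : ℝ, c ≤ θ₀ → θ₀ ≤ d →
      (∀ θ ∈ Set.Icc c d, r * Real.cos (m * θ) + i * Real.sin (m * θ) ≠ 0) →
      ∀ e ∈ Set.Icc c d, (x, e) ∈ connectedComponentIn S (x, θ₀) := by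
    intro c d hc hd hall e he
    have hsub : (fun θ => (x, θ)) '' Set.Icc c d ⊆ S := by
      rintro q ⟨θ, hθ, rfl⟩
      exact ⟨hxU, hall θ hθ⟩
    have hconn : IsPreconnected ((fun θ => (x, θ)) '' Set.Icc c d) :=
      isPreconnected_Icc.image _ (Continuous.continuousOn (by continuity))
    have hmem : (x, θ₀) ∈ (fun θ => (x, θ)) '' Set.Icc c d :=
      ⟨θ₀, ⟨hc, hd⟩, rfl⟩
    exact hconn.subset_connectedComponentIn hmem hsub ⟨e, he, rfl⟩
  by_cases hca : ∀ θ ∈ Set.Icc a θ₀, r * Real.cos (m * θ) + i * Real.sin (m * θ) ≠ 0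
  · exact ⟨(x, a), seg a θ₀ ha le_rfl hca a ⟨le_rfl, ha⟩, k0, hadef⟩
  · push_neg at hca
    obtain ⟨θ₁, hθ₁mem, hθ₁⟩ := hca
    have hall : ∀ θ ∈ Set.Icc θ₀ b, r * Real.cos (m * θ) + i * Real.sin (m * θ) ≠ 0 := by
      intro θ hθ h0
      have heq : θ₁ = θ := by
        apply zero_unique r i m hm θ₁ θ hne hθ₁ h0
        rw [abs_lt]
        constructor
        · have := hθ₁mem.2; have := hθ.1
          nlinarith [div_pos hπ hmR]
        · have := hθ₁mem.1; have := hθ.2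
          nlinarith
      have : θ₁ = θ₀ := le_antisymm hθ₁mem.2 (heq ▸ hθ.1)
      exact hΦ (this ▸ hθ₁)
    refine ⟨(x, b), seg θ₀ b le_rfl hb.le hall b ⟨hb.le, le_rfl⟩, k0 + 1, ?_⟩
    rw [hbdef]; push_cast; ring
end

section
/- Let m₁, m₂, m₃ be positive integers, let j₁, j₂, j₃ ∈ {0,1}, and let ε ∈ {+1,−1}. With f₁ = cos and f₀ = sin, the function F : T³ → ℝ given by F(x₁,x₂,x₃) = f_{j₁}(m₁x₁)·f_{j₂}(m₂x₂)·f_{j₃}(m₃x₃) + ε·f_{1−j₁}(m₁x₁)·f_{1−j₂}(m₂x₂)·f_{1−j₃}(m₃x₃) has exactly two nodal domains. -/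
noncomputable section

/-- `cos (m x)` is `2π`-periodic. -/
lemma cos_mul_periodic (m : ℕ) :
    Function.Periodic (fun x : ℝ => Real.cos (m * x)) (2 * Real.pi) := by
  intro x
  have h : (m : ℝ) * (x + 2 * Real.pi) = m * x + (m : ℤ) * (2 * Real.pi) := by
    push_cast; ring
  simp only [h, Real.cos_add_int_mul_two_pi]

/-- `sin (m x)` is `2π`-periodic. -/
lemma sin_mul_periodic (m : ℕ) :
    Function.Periodic (fun x : ℝ => Real.sin (m * x)) (2 * Real.pi) := by
  intro x
  have h : (m : ℝ) * (x + 2 * Real.pi) = m * x + (m : ℤ) * (2 * Real.pi) := by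
    push_cast; ring
  simp only [h, Real.sin_add_int_mul_two_pi]

/-- The function `cos (m ·)` on the circle `ℝ/2πℤ`. -/
def cosT (m : ℕ) : AddCircle (2 * Real.pi) → ℝ := (cos_mul_periodic m).lift

/-- The function `sin (m ·)` on the circle `ℝ/2πℤ`. -/
def sinT (m : ℕ) : AddCircle (2 * Real.pi) → ℝ := (sin_mul_periodic m).lift

/-- `f₁ = cos`, `f₀ = sin` (with frequency `m`) on the circle `ℝ/2πℤ`. -/
def fT (j : Fin 2) (m : ℕ) : AddCircle (2 * Real.pi) → ℝ :=
  if j = 1 then cosT m else sinT m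

/-- The flat 3-torus `T³ = (ℝ/2πℤ)³`. -/
abbrev T3 := AddCircle (2 * Real.pi) × AddCircle (2 * Real.pi) × AddCircle (2 * Real.pi)

open Real Set Function

/-!
Parametrise each circle factor so that `f_j` becomes `cos` and `ε f_{1-j}` becomes `sin`; in the
coordinates `s = x₁ - π/4`, `u = x₂ - x₃`, `w = x₂ + x₃ + π` the nodal function is then a positive
multiple of `G(s, u, w) = cos s cos u + sin s cos w` (`modelFun`). As `G(s + π, u, w) = -G`, it
suffices that `{G > 0} ⊆ ℝ³` is connected. Over a box `u ∈ [iπ, (i+1)π]`, `w ∈ [jπ, (j+1)π]` the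
map `cos` is invertible in `u` and `w`, which identifies that part of `{G > 0}` with
`{(s, a, b) ∈ ℝ × [-1,1]² | a cos s + b sin s > 0}`; this set is connected because each fibre over
`s` is convex and contains `(cos s, sin s)`. Adjacent boxes share points of `{G > 0}`.
-/

lemma isPreconnected_subtype_setOf {X : Type*} [TopologicalSpace X] {p q : X → Prop}
    (hpq : ∀ x, q x → p x) (h : IsPreconnected {x | q x}) :
    IsPreconnected {x : {x // p x} | q x} := by
  refine Topology.IsInducing.subtypeVal.isPreconnected_image.1 ?_
  convert h using 1
  ext x
  exact ⟨fun ⟨y, hy, hyx⟩ => hyx ▸ hy, fun hx => ⟨⟨x, hpq x hx⟩, hx, rfl⟩⟩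

lemma card_connectedComponents_ne_zero_eq_two {X : Type*} [TopologicalSpace X] {f : X → ℝ}
    (hf : Continuous f) (hpos : IsConnected {x | 0 < f x}) (hneg : IsConnected {x | f x < 0}) :
    Nat.card (ConnectedComponents {x // f x ≠ 0}) = 2 := by
  let Y := {x // f x ≠ 0}
  have hf' : Continuous fun y : Y => f y := hf.comp continuous_subtype_val
  have hclopen : IsClopen {y : Y | 0 < f y} := by
    refine ⟨?_, isOpen_lt continuous_const hf'⟩
    have : {y : Y | 0 < f y}ᶜ = {y : Y | f y < 0} := by
      ext y
      simpa [not_lt] using y.2.le_iff_lt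
    rw [← isOpen_compl_iff, this]
    exact isOpen_lt hf' continuous_const
  obtain ⟨xp, hxp⟩ := hpos.nonempty
  obtain ⟨xn, hxn⟩ := hneg.nonempty
  let yp : Y := ⟨xp, hxp.ne'⟩
  let yn : Y := ⟨xn, hxn.ne⟩
  rw [Nat.card_eq_two_iff]
  refine ⟨yp, yn, fun h => ?_, eq_univ_of_forall fun c => ?_⟩
  · have := hclopen.connectedComponent_subset (x := yp) hxp
    rw [ConnectedComponents.coe_eq_coe.1 h] at this
    have hxn' : 0 < f xn := this mem_connectedComponent
    exact lt_asymm hxn hxn'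
  · obtain ⟨y, rfl⟩ := ConnectedComponents.surjective_coe c
    rcases y.2.lt_or_gt with hy | hy
    · refine Or.inr (ConnectedComponents.coe_eq_coe.2 (connectedComponent_eq ?_))
      exact (isPreconnected_subtype_setOf (fun x hx => hx.ne)
        hneg.isPreconnected).subset_connectedComponent hy hxn
    · refine Or.inl (ConnectedComponents.coe_eq_coe.2 (connectedComponent_eq ?_))
      exact (isPreconnected_subtype_setOf (fun x hx => hx.ne')
        hpos.isPreconnected).subset_connectedComponent hy hxp

lemma isConnected_setOf_pos_of_comp {X Y : Type*} [TopologicalSpace X] [TopologicalSpace Y]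
    {g : X → Y} (hg : Continuous g) (hgs : Surjective g) {F : Y → ℝ} {G : X → ℝ} {c : ℝ}
    (hc : 0 < c) (h : ∀ v, F (g v) = c * G v) (hG : IsConnected {v | 0 < G v}) :
    IsConnected {p | 0 < F p} := by
  rw [← image_preimage_eq {p | 0 < F p} hgs]
  convert hG.image g hg.continuousOn using 2
  ext v
  simp [h, mul_pos_iff_of_pos_left hc]

lemma cosT_coe (m : ℕ) (x : ℝ) : cosT m x = cos (m * x) := Periodic.lift_coe _ _

lemma sinT_coe (m : ℕ) (x : ℝ) : sinT m x = sin (m * x) := Periodic.lift_coe _ _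

lemma continuous_fT (j : Fin 2) (m : ℕ) : Continuous (fT j m) := by
  have hlift : ∀ f : AddCircle (2 * π) → ℝ, Continuous (fun x : ℝ => f x) → Continuous f :=
    fun f hf => (QuotientAddGroup.isQuotientMap_mk _).continuous_iff.2 hf
  unfold fT
  split
  · exact hlift _ (by simp only [cosT_coe]; fun_prop)
  · exact hlift _ (by simp only [sinT_coe]; fun_prop)

def circleParam (m : ℕ) (σ c t : ℝ) : AddCircle (2 * π) := ((σ * t + c) / m : ℝ)

lemma continuous_circleParam (m : ℕ) (σ c : ℝ) : Continuous (circleParam m σ c) :=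
  (AddCircle.continuous_mk' _).comp (by fun_prop)

lemma surjective_circleParam {m : ℕ} (hm : 0 < m) {σ : ℝ} (hσ : σ ≠ 0) (c : ℝ) :
    Surjective (circleParam m σ c) := by
  intro p
  obtain ⟨x, rfl⟩ := QuotientAddGroup.mk_surjective p
  refine ⟨(m * x - c) / σ, ?_⟩
  have : (m : ℝ) ≠ 0 := by positivity
  simp only [circleParam]
  congr 1
  field_simp
  ring

lemma cosT_circleParam {m : ℕ} (hm : 0 < m) (σ c t : ℝ) :
    cosT m (circleParam m σ c t) = cos (σ * t + c) := by
  rw [circleParam, cosT_coe, mul_div_cancel₀ _ (by positivity)]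

lemma sinT_circleParam {m : ℕ} (hm : 0 < m) (σ c t : ℝ) :
    sinT m (circleParam m σ c t) = sin (σ * t + c) := by
  rw [circleParam, sinT_coe, mul_div_cancel₀ _ (by positivity)]

lemma exists_circle_param (j : Fin 2) {m : ℕ} (hm : 0 < m) {ε : ℝ} (hε : ε = 1 ∨ ε = -1) :
    ∃ φ : ℝ → AddCircle (2 * π), Continuous φ ∧ Surjective φ ∧
      ∀ t, fT j m (φ t) = cos t ∧ ε * fT (1 - j) m (φ t) = sin t := by
  have param (σ c : ℝ) (hσ : σ ≠ 0)
      (h : ∀ t, fT j m (circleParam m σ c t) = cos t ∧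
        ε * fT (1 - j) m (circleParam m σ c t) = sin t) :
      ∃ φ : ℝ → AddCircle (2 * π), Continuous φ ∧ Surjective φ ∧
        ∀ t, fT j m (φ t) = cos t ∧ ε * fT (1 - j) m (φ t) = sin t :=
    ⟨_, continuous_circleParam m σ c, surjective_circleParam hm hσ c, h⟩
  fin_cases j <;> rcases hε with rfl | rfl
  · refine param (-1) (π / 2) (by norm_num) fun t => ?_
    simp [fT, cosT_circleParam hm, sinT_circleParam hm, ← sub_eq_neg_add, sin_pi_div_two_sub,
      cos_pi_div_two_sub]
  · refine param 1 (π / 2) one_ne_zero fun t => ?_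
    simp [fT, cosT_circleParam hm, sinT_circleParam hm, sin_add_pi_div_two, cos_add_pi_div_two]
  · refine param 1 0 one_ne_zero fun t => ?_
    simp [fT, cosT_circleParam hm, sinT_circleParam hm]
  · refine param (-1) 0 (by norm_num) fun t => ?_
    simp [fT, cosT_circleParam hm, sinT_circleParam hm]

def modelFun (v : ℝ × ℝ × ℝ) : ℝ := cos v.1 * cos v.2.1 + sin v.1 * cos v.2.2

def halfSquareBundle : Set (ℝ × ℝ × ℝ) :=
  {q | q.2.1 ∈ Icc (-1) 1 ∧ q.2.2 ∈ Icc (-1) 1 ∧ 0 < q.2.1 * cos q.1 + q.2.2 * sin q.1}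

lemma segment_subset_halfSquareBundle {q : ℝ × ℝ × ℝ} (hq : q ∈ halfSquareBundle) :
    segment ℝ q (q.1, cos q.1, sin q.1) ⊆ halfSquareBundle := by
  obtain ⟨s, a, b⟩ := q
  obtain ⟨ha, hb, hpos⟩ := hq
  rintro _ ⟨θ, η, hθ, hη, hθη, rfl⟩
  have hconv {x y : ℝ} (hx : x ∈ Icc (-1 : ℝ) 1) (hy : y ∈ Icc (-1 : ℝ) 1) :
      θ * x + η * y ∈ Icc (-1 : ℝ) 1 :=
    convex_Icc (-1 : ℝ) 1 hx hy hθ hη hθη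
  refine ⟨hconv ha ⟨neg_one_le_cos s, cos_le_one s⟩, hconv hb ⟨neg_one_le_sin s, sin_le_one s⟩, ?_⟩
  have hs : θ * s + η * s = s := by rw [← add_mul, hθη, one_mul]
  simp only [Prod.smul_mk, Prod.mk_add_mk, smul_eq_mul, hs]
  have : 0 ≤ η * (cos s ^ 2 + sin s ^ 2) := by positivity
  rcases hθ.eq_or_lt with rfl | hθ
  · nlinarith [sin_sq_add_cos_sq s]
  · nlinarith [mul_pos hθ hpos, sin_sq_add_cos_sq s]

lemma isPreconnected_halfSquareBundle : IsPreconnected halfSquareBundle := by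
  have hcurve : IsPreconnected (range fun s : ℝ => (s, cos s, sin s)) :=
    isPreconnected_range (by fun_prop)
  refine isPreconnected_of_forall (0, 1, 0) fun q hq => ?_
  refine ⟨segment ℝ q (q.1, cos q.1, sin q.1) ∪ range fun s : ℝ => (s, cos s, sin s),
    union_subset (segment_subset_halfSquareBundle hq) ?_, ?_, ?_, ?_⟩
  · rintro _ ⟨s, rfl⟩
    exact ⟨⟨neg_one_le_cos s, cos_le_one s⟩, ⟨neg_one_le_sin s, sin_le_one s⟩,
      by nlinarith [cos_sq_add_sin_sq s]⟩
  · exact Or.inr ⟨0, by simp⟩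
  · exact Or.inl (left_mem_segment ℝ _ _)
  · exact (convex_segment _ _).isPreconnected.union _ (right_mem_segment ℝ _ _) ⟨q.1, rfl⟩ hcurve

/-- The inverse of `cos` on `[iπ, (i+1)π]`. -/
def arccosBranch (i : ℤ) (a : ℝ) : ℝ := i * π + arccos ((-1) ^ i * a)

lemma continuous_arccosBranch (i : ℤ) : Continuous (arccosBranch i) := by
  unfold arccosBranch; fun_prop

lemma cos_arccosBranch (i : ℤ) {a : ℝ} (ha : a ∈ Icc (-1) 1) : cos (arccosBranch i a) = a := by
  have h1 : |(-1 : ℝ) ^ i * a| ≤ 1 := by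
    rw [abs_mul, abs_zpow, abs_neg, abs_one, one_zpow, one_mul]; exact abs_le.2 ha
  rw [arccosBranch, add_comm, cos_add_int_mul_pi, cos_arccos (abs_le.1 h1).1 (abs_le.1 h1).2,
    ← mul_assoc, ← mul_zpow]
  norm_num

lemma arccosBranch_mem (i : ℤ) (a : ℝ) : arccosBranch i a ∈ Icc (i * π) ((i + 1) * π) := by
  have := arccos_nonneg ((-1) ^ i * a)
  have := arccos_le_pi ((-1) ^ i * a)
  constructor <;> simp only [arccosBranch] <;> linarith

lemma arccosBranch_cos {i : ℤ} {u : ℝ} (hu : u ∈ Icc (i * π) ((i + 1) * π)) :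
    arccosBranch i (cos u) = u := by
  rw [arccosBranch, ← cos_sub_int_mul_pi, arccos_cos (by linarith [hu.1]) (by linarith [hu.2])]
  ring

def modelPiece (i j : ℤ) : Set (ℝ × ℝ × ℝ) :=
  {v | 0 < modelFun v ∧ v.2.1 ∈ Icc (i * π) ((i + 1) * π) ∧ v.2.2 ∈ Icc (j * π) ((j + 1) * π)}

lemma modelPiece_eq_image (i j : ℤ) :
    modelPiece i j =
      (fun q : ℝ × ℝ × ℝ => (q.1, arccosBranch i q.2.1, arccosBranch j q.2.2)) ''
        halfSquareBundle := by
  ext ⟨s, u, w⟩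
  constructor
  · rintro ⟨hpos, hu, hw⟩
    refine ⟨(s, cos u, cos w), ⟨⟨neg_one_le_cos u, cos_le_one u⟩, ⟨neg_one_le_cos w, cos_le_one w⟩,
      by rw [modelFun] at hpos; linarith⟩, ?_⟩
    simp only [arccosBranch_cos hu, arccosBranch_cos hw]
  · rintro ⟨⟨s', a, b⟩, ⟨ha, hb, hpos⟩, h⟩
    simp only [Prod.mk.injEq] at h
    obtain ⟨rfl, rfl, rfl⟩ := h
    refine ⟨?_, arccosBranch_mem i a, arccosBranch_mem j b⟩
    rw [modelFun]
    simp only [cos_arccosBranch i ha, cos_arccosBranch j hb]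
    linarith

lemma isPreconnected_modelPiece (i j : ℤ) : IsPreconnected (modelPiece i j) := by
  rw [modelPiece_eq_image]
  exact isPreconnected_halfSquareBundle.image _ (by
    apply Continuous.continuousOn
    have := continuous_arccosBranch i
    have := continuous_arccosBranch j
    fun_prop)

lemma modelPiece_inter_succ_left_nonempty (i j : ℤ) :
    (modelPiece i j ∩ modelPiece (i + 1) j).Nonempty := by
  have hpos : 0 < modelFun (((i + 1 : ℤ) : ℝ) * π, ((i + 1 : ℤ) : ℝ) * π, j * π + π / 2) := by
    simp only [modelFun, cos_add_pi_div_two, sin_int_mul_pi, neg_zero, mul_zero, add_zero]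
    exact mul_self_pos.2 (by rw [cos_int_mul_pi]; exact zpow_ne_zero _ (by norm_num))
  have hw : j * π + π / 2 ∈ Icc (j * π) ((j + 1) * π) := by
    constructor <;> linarith [pi_pos]
  refine ⟨_, ⟨hpos, ?_, hw⟩, ⟨hpos, ?_, hw⟩⟩ <;> constructor <;> push_cast <;> linarith [pi_pos]

lemma modelPiece_inter_succ_right_nonempty (i j : ℤ) :
    (modelPiece i j ∩ modelPiece i (j + 1)).Nonempty := by
  have hpos :
      0 < modelFun (((j + 1 : ℤ) : ℝ) * π + π / 2, i * π + π / 2, ((j + 1 : ℤ) : ℝ) * π) := by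
    simp only [modelFun, cos_add_pi_div_two, sin_add_pi_div_two, sin_int_mul_pi, neg_zero,
      mul_zero, zero_add]
    exact mul_self_pos.2 (by rw [cos_int_mul_pi]; exact zpow_ne_zero _ (by norm_num))
  have hu : i * π + π / 2 ∈ Icc (i * π) ((i + 1) * π) := by
    constructor <;> linarith [pi_pos]
  refine ⟨_, ⟨hpos, hu, ?_⟩, ⟨hpos, hu, ?_⟩⟩ <;> constructor <;> push_cast <;> linarith [pi_pos]

lemma exists_int_mem_Icc_mul_pi (u : ℝ) : ∃ i : ℤ, u ∈ Icc (i * π) ((i + 1) * π) := by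
  refine ⟨⌊u / π⌋, ?_, ?_⟩
  · exact (le_div_iff₀ pi_pos).1 (Int.floor_le _)
  · exact ((div_le_iff₀ pi_pos).1 (Int.lt_floor_add_one _).le)

lemma setOf_modelFun_pos_eq_iUnion :
    {v | 0 < modelFun v} = ⋃ i, ⋃ j, modelPiece i j := by
  ext v
  simp only [mem_ofPred_eq, mem_iUnion]
  constructor
  · intro hv
    obtain ⟨i, hi⟩ := exists_int_mem_Icc_mul_pi v.2.1
    obtain ⟨j, hj⟩ := exists_int_mem_Icc_mul_pi v.2.2
    exact ⟨i, j, hv, hi, hj⟩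
  · rintro ⟨i, j, hv, -⟩
    exact hv

lemma isConnected_setOf_modelFun_pos : IsConnected {v | 0 < modelFun v} := by
  refine ⟨⟨0, by simp [modelFun]⟩, ?_⟩
  rw [setOf_modelFun_pos_eq_iUnion]
  refine IsPreconnected.iUnion_of_chain
    (fun i => IsPreconnected.iUnion_of_chain (isPreconnected_modelPiece i) fun j => ?_) fun i => ?_
  · rw [Order.succ_eq_add_one]
    exact modelPiece_inter_succ_right_nonempty i j
  · obtain ⟨v, hv, hv'⟩ := modelPiece_inter_succ_left_nonempty i 0
    exact ⟨v, mem_iUnion.2 ⟨0, hv⟩, mem_iUnion.2 ⟨0, hv'⟩⟩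

lemma modelFun_add_pi (v : ℝ × ℝ × ℝ) : modelFun (v + (π, 0, 0)) = -modelFun v := by
  simp only [modelFun, Prod.fst_add, Prod.snd_add, add_zero, cos_add_pi, sin_add_pi]
  ring

lemma isConnected_setOf_modelFun_neg : IsConnected {v | modelFun v < 0} := by
  have : {v | modelFun v < 0} =
      Homeomorph.addRight ((π, 0, 0) : ℝ × ℝ × ℝ) ⁻¹' {v | 0 < modelFun v} := by
    ext v
    simp [modelFun_add_pi]
  rw [this, Homeomorph.isConnected_preimage]
  exact isConnected_setOf_modelFun_pos

lemma cos_mul_cos_mul_cos_add_sin_mul_sin_mul_sin (x y z : ℝ) :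
    cos x * cos y * cos z + sin x * sin y * sin z =
      √2 / 2 * modelFun (x - π / 4, y - z, y + z + π) := by
  simp only [modelFun, cos_sub, sin_sub, cos_add, cos_pi, sin_pi, cos_pi_div_four,
    sin_pi_div_four]
  linear_combination -(cos x * cos y * cos z + sin x * sin y * sin z) * sq_sqrt zero_le_two / 2

def modelCoords (v : ℝ × ℝ × ℝ) : ℝ × ℝ × ℝ :=
  (v.1 + π / 4, (v.2.1 + v.2.2 - π) / 2, (v.2.2 - π - v.2.1) / 2)

lemma surjective_modelCoords : Surjective modelCoords := fun x =>
  ⟨(x.1 - π / 4, x.2.1 - x.2.2, x.2.1 + x.2.2 + π), by ext <;> simp only [modelCoords] <;> ring⟩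

lemma cos_mul_cos_mul_cos_add_sin_mul_sin_mul_sin_modelCoords (v : ℝ × ℝ × ℝ) :
    cos (modelCoords v).1 * cos (modelCoords v).2.1 * cos (modelCoords v).2.2 +
        sin (modelCoords v).1 * sin (modelCoords v).2.1 * sin (modelCoords v).2.2 =
      √2 / 2 * modelFun v := by
  rw [cos_mul_cos_mul_cos_add_sin_mul_sin_mul_sin]
  congr 2
  ext <;> simp only [modelCoords] <;> ring

/-- Case 1 of the paper's eigenbasis of the flat 3-torus: for positive integers
`m₁, m₂, m₃`, indices `j₁, j₂, j₃ ∈ {0,1}` and a sign `ε = ±1`, the function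
`F(x₁,x₂,x₃) = f_{j₁}(m₁x₁) f_{j₂}(m₂x₂) f_{j₃}(m₃x₃)
  + ε f_{1-j₁}(m₁x₁) f_{1-j₂}(m₂x₂) f_{1-j₃}(m₃x₃)` on `T³`
has exactly two nodal domains. -/
theorem stmt8 (m₁ m₂ m₃ : ℕ) (h₁ : 0 < m₁) (h₂ : 0 < m₂) (h₃ : 0 < m₃)
    (j₁ j₂ j₃ : Fin 2) (ε : ℝ) (hε : ε = 1 ∨ ε = -1) :
    Nat.card (ConnectedComponents
      {p : T3 // fT j₁ m₁ p.1 * fT j₂ m₂ p.2.1 * fT j₃ m₃ p.2.2 +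
        ε * (fT (1 - j₁) m₁ p.1 * fT (1 - j₂) m₂ p.2.1 * fT (1 - j₃) m₃ p.2.2) ≠ 0}) = 2 := by
  obtain ⟨φ₁, hφ₁, hφ₁s, hf₁⟩ := exists_circle_param j₁ h₁ hε
  obtain ⟨φ₂, hφ₂, hφ₂s, hf₂⟩ := exists_circle_param j₂ h₂ (Or.inl rfl)
  obtain ⟨φ₃, hφ₃, hφ₃s, hf₃⟩ := exists_circle_param j₃ h₃ (Or.inl rfl)
  set F : T3 → ℝ := fun p => fT j₁ m₁ p.1 * fT j₂ m₂ p.2.1 * fT j₃ m₃ p.2.2 +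
    ε * (fT (1 - j₁) m₁ p.1 * fT (1 - j₂) m₂ p.2.1 * fT (1 - j₃) m₃ p.2.2)
  have hF : Continuous F := by
    have := continuous_fT
    fun_prop
  let g := Prod.map φ₁ (Prod.map φ₂ φ₃) ∘ modelCoords
  have hg : Continuous g := (hφ₁.prodMap (hφ₂.prodMap hφ₃)).comp (by unfold modelCoords; fun_prop)
  have hgs : Surjective g := (hφ₁s.prodMap (hφ₂s.prodMap hφ₃s)).comp surjective_modelCoords
  have hFg (v : ℝ × ℝ × ℝ) : F (g v) = √2 / 2 * modelFun v := by
    obtain ⟨c₁, s₁⟩ := hf₁ (modelCoords v).1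
    obtain ⟨c₂, s₂⟩ := hf₂ (modelCoords v).2.1
    obtain ⟨c₃, s₃⟩ := hf₃ (modelCoords v).2.2
    rw [← cos_mul_cos_mul_cos_add_sin_mul_sin_mul_sin_modelCoords, ← c₁, ← c₂, ← c₃, ← s₁, ← s₂,
      ← s₃]
    simp only [F, g, comp_apply, Prod.map_fst, Prod.map_snd]
    ring
  have hc : (0 : ℝ) < √2 / 2 := by positivity
  refine card_connectedComponents_ne_zero_eq_two hF
    (isConnected_setOf_pos_of_comp hg hgs hc hFg isConnected_setOf_modelFun_pos) ?_
  simpa using isConnected_setOf_pos_of_comp (F := -F) (G := -modelFun) hg hgs hc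
    (fun v => by simp [hFg]) (by simpa using isConnected_setOf_modelFun_neg)
end
end

section
/- Let m be a positive integer and ε ∈ {+1,−1}. Then each of the functions F, G : T³ → ℝ given by F(x₁,x₂,x₃) = sin(mx₁)·sin(mx₂) + ε·cos(mx₁)·sin(mx₃) and G(x₁,x₂,x₃) = cos(mx₁)·cos(mx₂) + ε·cos(mx₃)·sin(mx₁) has exactly two nodal domains. -/
noncomputable section

/-!
`F` and `G` are both pulled back from `modelF (a, b, c) = sin a sin b + cos a sin c` along a
continuous surjection `ℝ³ → T³` (an affine change of variables followed by the quotient map),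
and `modelF (a + π, b, c) = -modelF (a, b, c)`. So both sign sets on `T³` are path connected
once `{modelF > 0}` is, and they are complementary clopen pieces of the complement of the
nodal set.

`modelF` depends on `b, c` only through `(s, t) = (sin b, sin c)`, and a path in
`(a, s, t)`-space with `|s|, |t| ≤ 1` lifts to `ℝ³`, since `sin` is inverted by `arcsin` on a
branch through any given point. For fixed `a` the positive set in `(s, t)` is a half-plane cut
with the square and contains `(sin a, cos a)`, so every point is joined to the curve
`θ ↦ (θ, sin θ, cos θ)` and along it to `(π/2, 1, 1)`. The lifts
`(π/2, π/2 + 2πk, π/2 + 2πl)` of that point are joined to each other by moving one coordinate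
at a time.
-/

open Real Set Function

theorem natCard_connectedComponents_eq_two_of_isClopen {X : Type*} [TopologicalSpace X]
    {A : Set X} (hA : IsClopen A) (hconn : IsConnected A) (hconn' : IsConnected Aᶜ) :
    Nat.card (ConnectedComponents X) = 2 := by
  let U (b : Bool) : Set X := cond b A Aᶜ
  have hU : ∀ b, IsClopen (U b) ∧ IsConnected (U b) := by
    rintro (_ | _)
    exacts [⟨hA.compl, hconn'⟩, ⟨hA, hconn⟩]
  have hcard (b : Bool) : Nat.card (ConnectedComponents (U b)) = 1 := by
    have := isConnected_iff_connectedSpace.mp (hU b).2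
    exact Nat.card_eq_one_iff_unique.mpr ⟨inferInstance, inferInstance⟩
  have (b : Bool) : Finite (ConnectedComponents (U b)) :=
    Nat.finite_of_card_ne_zero (by simp [hcard])
  rw [Nat.card_congr (ConnectedComponents.equivOfIsClopen (fun b => (hU b).1)
    (pairwise_disjoint_on_bool.mpr disjoint_compl_right)
    (union_eq_iUnion.symm.trans (union_compl_self A))),
    Nat.card_sigma, Fintype.sum_bool, hcard, hcard]

theorem natCard_connectedComponents_ne_zero_eq_two {Y : Type*} [TopologicalSpace Y] {H : Y → ℝ}
    (hH : Continuous H) (hpos : IsConnected (H ⁻¹' Ioi 0))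
    (hneg : IsConnected (H ⁻¹' Iio 0)) :
    Nat.card (ConnectedComponents {y // H y ≠ 0}) = 2 := by
  have hcont : Continuous fun x : {y // H y ≠ 0} => H x := hH.comp continuous_subtype_val
  have hcompl :
      {x : {y // H y ≠ 0} | H x ∈ Ioi 0}ᶜ = {x : {y // H y ≠ 0} | H x ∈ Iio 0} :=
    ext fun x => not_lt.trans x.2.le_iff_lt
  have hrestrict {S : Set ℝ} (hS : (0 : ℝ) ∉ S) (h : IsConnected (H ⁻¹' S)) :
      IsConnected {x : {y // H y ≠ 0} | H x ∈ S} := by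
    rw [← image_preimage_eq_of_subset (f := Subtype.val) (s := H ⁻¹' S)
      fun y (hy : H y ∈ S) => ⟨⟨y, fun h : H y = 0 => hS (h ▸ hy)⟩, rfl⟩] at h
    exact ⟨h.nonempty.of_image,
      Topology.IsInducing.subtypeVal.isPreconnected_image.mp h.isPreconnected⟩
  refine natCard_connectedComponents_eq_two_of_isClopen (A := {x | H x ∈ Ioi 0})
    ⟨?_, isOpen_lt continuous_const hcont⟩ (hrestrict (by simp) hpos) ?_
  · rw [← isOpen_compl_iff, hcompl]
    exact isOpen_lt hcont continuous_const
  · rw [hcompl]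
    exact hrestrict (by simp) hneg

theorem IsPathConnected.of_preimage_of_surjective {X Y : Type*} [TopologicalSpace X]
    [TopologicalSpace Y] {Ψ : X → Y} (hΨ : Continuous Ψ) (hsurj : Surjective Ψ) {S : Set Y}
    (h : IsPathConnected (Ψ ⁻¹' S)) : IsPathConnected S :=
  hsurj.image_preimage S ▸ h.image hΨ

lemma JoinedIn.of_mapsTo_uIcc {X : Type*} [TopologicalSpace X] {S : Set X} {g : ℝ → X}
    (hg : Continuous g) {u v : ℝ} (h : MapsTo g (uIcc u v) S) : JoinedIn S (g u) (g v) :=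
  ((((convex_uIcc u v).isPathConnected nonempty_uIcc).joinedIn u left_mem_uIcc v
    right_mem_uIcc).map hg).mono h.image_subset

lemma exists_eq_add_mul_arcsin_sin (b : ℝ) :
    ∃ c σ : ℝ, b = c + σ * arcsin (sin b) ∧ ∀ x, sin (c + σ * x) = sin x := by
  obtain ⟨k, hk | hk⟩ := sin_eq_sin_iff.mp (sin_arcsin' (sin_mem_Icc b))
  · refine ⟨k * (2 * π), 1, by linear_combination hk, fun x => ?_⟩
    rw [one_mul, add_comm, sin_add_int_mul_two_pi]
  · refine ⟨π + k * (2 * π), -1, by linear_combination hk, fun x => ?_⟩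
    rw [show π + k * (2 * π) + -1 * x = π - x + k * (2 * π) by ring, sin_add_int_mul_two_pi,
      sin_pi_sub]

lemma exists_path_sin_lift {b y : ℝ} (γ : Path (sin b) y) (hγ : ∀ t, γ t ∈ Icc (-1) 1) :
    ∃ b', ∃ β : Path b b', ∀ t, sin (β t) = γ t := by
  obtain ⟨c, σ, hb, hsin⟩ := exists_eq_add_mul_arcsin_sin b
  refine ⟨c + σ * arcsin y,
    { toFun := fun t => c + σ * arcsin (γ t)
      source' := by simp only [γ.source, ← hb]
      target' := by simp only [γ.target] }, fun t => ?_⟩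
  simp only [Path.coe_mk_mk, hsin, sin_arcsin' (hγ t)]

def sinProj (p : ℝ × ℝ × ℝ) : ℝ × ℝ × ℝ := (p.1, sin p.2.1, sin p.2.2)

lemma exists_path_sinProj_lift {p y : ℝ × ℝ × ℝ} (γ : Path (sinProj p) y)
    (hγ : ∀ t, (γ t).2 ∈ Icc (-1) 1 ×ˢ Icc (-1) 1) :
    ∃ q, ∃ β : Path p q, ∀ t, sinProj (β t) = γ t := by
  obtain ⟨b, β₂, hβ₂⟩ :=
    exists_path_sin_lift (γ.map (continuous_fst.comp continuous_snd)) fun t => (hγ t).1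
  obtain ⟨c, β₃, hβ₃⟩ :=
    exists_path_sin_lift (γ.map (continuous_snd.comp continuous_snd)) fun t => (hγ t).2
  exact ⟨_, (γ.map continuous_fst).prod (β₂.prod β₃), fun t =>
    Prod.ext rfl (Prod.ext (hβ₂ t) (hβ₃ t))⟩

def modelF (p : ℝ × ℝ × ℝ) : ℝ := sin p.1 * sin p.2.1 + cos p.1 * sin p.2.2

def halfSquare (a : ℝ) : Set (ℝ × ℝ) :=
  {z | 0 < z.1 * sin a + z.2 * cos a} ∩ Icc (-1) 1 ×ˢ Icc (-1) 1

def sinRegion : Set (ℝ × ℝ × ℝ) := {y | y.2 ∈ halfSquare y.1}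

lemma preimage_sinProj_sinRegion : sinProj ⁻¹' sinRegion = modelF ⁻¹' Ioi 0 := by
  ext p
  simp [sinProj, sinRegion, halfSquare, modelF, neg_one_le_sin, sin_le_one, mul_comm]

lemma convex_halfSquare (a : ℝ) : Convex ℝ (halfSquare a) :=
  (convex_halfSpace_gt ⟨fun z w => by simp only [Prod.fst_add, Prod.snd_add]; ring,
    fun r z => by simp only [Prod.smul_fst, Prod.smul_snd, smul_eq_mul]; ring⟩ 0).inter
    ((convex_Icc _ _).prod (convex_Icc _ _))

lemma sin_cos_mem_halfSquare (θ : ℝ) : (sin θ, cos θ) ∈ halfSquare θ :=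
  ⟨show 0 < sin θ * sin θ + cos θ * cos θ by
      rw [← sq, ← sq, sin_sq_add_cos_sq]
      exact one_pos,
    sin_mem_Icc θ, cos_mem_Icc θ⟩

lemma joinedIn_sinRegion_of_mem_halfSquare {a : ℝ} {z z' : ℝ × ℝ} (hz : z ∈ halfSquare a)
    (hz' : z' ∈ halfSquare a) : JoinedIn sinRegion (a, z) (a, z') :=
  ((((convex_halfSquare a).isPathConnected ⟨z, hz⟩).joinedIn z hz z' hz').map
    (f := fun w => (a, w)) (by fun_prop)).mono (by rintro _ ⟨w, hw, rfl⟩; exact hw)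

lemma joinedIn_sinRegion_base {y : ℝ × ℝ × ℝ} (hy : y ∈ sinRegion) :
    JoinedIn sinRegion y (π / 2, 1, 1) := by
  have to_circle : JoinedIn sinRegion y (y.1, sin y.1, cos y.1) :=
    joinedIn_sinRegion_of_mem_halfSquare hy (sin_cos_mem_halfSquare y.1)
  have along_circle : JoinedIn sinRegion (y.1, sin y.1, cos y.1) (π / 2, 1, 0) := by
    simpa using JoinedIn.of_mapsTo_uIcc (g := fun θ => (θ, sin θ, cos θ)) (by fun_prop)
      (u := y.1) (v := π / 2) fun θ _ => sin_cos_mem_halfSquare θ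
  have to_base : JoinedIn sinRegion (π / 2, 1, 0) (π / 2, 1, 1) :=
    joinedIn_sinRegion_of_mem_halfSquare (by simpa using sin_cos_mem_halfSquare (π / 2))
      (by simp [halfSquare])
  exact to_circle.trans (along_circle.trans to_base)

lemma joinedIn_modelF_pos_pi_div_two_zero {b c : ℝ} (hb : sin b = 1) (hc : sin c = 1) :
    JoinedIn (modelF ⁻¹' Ioi 0) (π / 2, b, c) (0, b, c) :=
  JoinedIn.of_mapsTo_uIcc (g := fun θ => (θ, b, c)) (by fun_prop) fun θ hθ => by
    rw [uIcc_of_ge (by positivity)] at hθ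
    have hsin := sin_nonneg_of_nonneg_of_le_pi hθ.1 (by linarith [hθ.2, pi_pos])
    have hcos := cos_nonneg_of_mem_Icc ⟨by linarith [hθ.1, pi_pos], hθ.2⟩
    simp only [mem_preimage, mem_Ioi, modelF, hb, hc, mul_one]
    nlinarith [sin_sq_add_cos_sq θ]

lemma joinedIn_modelF_pos_of_sin_eq_one {b c : ℝ} (hb : sin b = 1) (hc : sin c = 1) :
    JoinedIn (modelF ⁻¹' Ioi 0) (π / 2, b, c) (π / 2, π / 2, π / 2) := by
  have move_b : JoinedIn (modelF ⁻¹' Ioi 0) (0, b, c) (0, π / 2, c) :=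
    JoinedIn.of_mapsTo_uIcc (g := fun θ => (0, θ, c)) (by fun_prop) fun θ _ => by
      simp [modelF, hc]
  have move_c : JoinedIn (modelF ⁻¹' Ioi 0) (π / 2, π / 2, c) (π / 2, π / 2, π / 2) :=
    JoinedIn.of_mapsTo_uIcc (g := fun θ => (π / 2, π / 2, θ)) (by fun_prop) fun θ _ => by
      simp [modelF]
  exact (joinedIn_modelF_pos_pi_div_two_zero hb hc).trans
    (move_b.trans ((joinedIn_modelF_pos_pi_div_two_zero sin_pi_div_two hc).symm.trans move_c))

theorem isPathConnected_modelF_pos : IsPathConnected (modelF ⁻¹' Ioi 0) := by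
  refine ⟨(π / 2, π / 2, π / 2), by simp [modelF], fun {p} hp => ?_⟩
  rw [← preimage_sinProj_sinRegion] at hp
  have hbase := joinedIn_sinRegion_base hp
  obtain ⟨q, β, hβ⟩ := exists_path_sinProj_lift hbase.somePath
    fun t => (hbase.somePath_mem t).2
  have hpq : JoinedIn (modelF ⁻¹' Ioi 0) p q := ⟨β, fun t => by
    rw [← preimage_sinProj_sinRegion, mem_preimage, hβ t]
    exact hbase.somePath_mem t⟩
  obtain ⟨a, b, c⟩ := q
  obtain ⟨rfl, hb, hc⟩ : a = π / 2 ∧ sin b = 1 ∧ sin c = 1 := by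
    have h1 := hβ 1
    rw [Path.target, Path.target] at h1
    simpa [sinProj] using h1
  exact (hpq.trans (joinedIn_modelF_pos_of_sin_eq_one hb hc)).symm

lemma modelF_add_pi (p : ℝ × ℝ × ℝ) : modelF (p + (π, 0, 0)) = -modelF p := by
  simp only [modelF, Prod.fst_add, Prod.snd_add, add_zero, sin_add_pi, cos_add_pi]
  ring

theorem isPathConnected_modelF_neg : IsPathConnected (modelF ⁻¹' Iio 0) := by
  refine .of_preimage_of_surjective (continuous_add_const (π, 0, 0)) (add_right_surjective _) ?_
  convert isPathConnected_modelF_pos using 1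
  ext p
  simp [modelF_add_pi]

lemma sinT_coe_div {m : ℕ} (hm : (m : ℝ) ≠ 0) (x : ℝ) :
    sinT m (x / m : ℝ) = sin x := by
  rw [sinT, (sin_mul_periodic m).lift_coe, mul_div_cancel₀ x hm]

lemma cosT_coe_div {m : ℕ} (hm : (m : ℝ) ≠ 0) (x : ℝ) :
    cosT m (x / m : ℝ) = cos x := by
  rw [cosT, (cos_mul_periodic m).lift_coe, mul_div_cancel₀ x hm]

@[fun_prop]
lemma continuous_sinT (m : ℕ) : Continuous (sinT m) :=
  Continuous.quotient_liftOn' (by fun_prop) _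

@[fun_prop]
lemma continuous_cosT (m : ℕ) : Continuous (cosT m) :=
  Continuous.quotient_liftOn' (by fun_prop) _

def torusChart (m : ℕ) (ε : ℝ) (v y : ℝ × ℝ × ℝ) : T3 :=
  (((y.1 - v.1) / m : ℝ), ((y.2.1 - v.2.1) / m : ℝ), ((ε * y.2.2 - v.2.2) / m : ℝ))

lemma continuous_torusChart (m : ℕ) (ε : ℝ) (v : ℝ × ℝ × ℝ) :
    Continuous (torusChart m ε v) := by
  unfold torusChart
  fun_prop

lemma torusChart_surjective {m : ℕ} (hm : (m : ℝ) ≠ 0) {ε : ℝ} (hε : ε = 1 ∨ ε = -1)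
    (v : ℝ × ℝ × ℝ) : Surjective (torusChart m ε v) := by
  rintro ⟨x₁, x₂, x₃⟩
  obtain ⟨a, rfl⟩ := QuotientAddGroup.mk_surjective x₁
  obtain ⟨b, rfl⟩ := QuotientAddGroup.mk_surjective x₂
  obtain ⟨c, rfl⟩ := QuotientAddGroup.mk_surjective x₃
  have hεε : ε * ε = 1 := by rcases hε with rfl | rfl <;> norm_num
  refine ⟨(m * a + v.1, m * b + v.2.1, ε * (m * c + v.2.2)), ?_⟩
  simp only [torusChart, ← mul_assoc, hεε, one_mul, add_sub_cancel_right,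
    mul_div_cancel_left₀ _ hm]

lemma mul_sin_mul_self {ε : ℝ} (hε : ε = 1 ∨ ε = -1) (x : ℝ) :
    ε * sin (ε * x) = sin x := by
  rcases hε with rfl | rfl <;> simp

lemma natCard_connectedComponents_of_comp_torusChart {m : ℕ} (hm : (m : ℝ) ≠ 0) {ε : ℝ}
    (hε : ε = 1 ∨ ε = -1) (v : ℝ × ℝ × ℝ) {H : T3 → ℝ} (hH : Continuous H)
    (hchart : ∀ y, H (torusChart m ε v y) = modelF y) :
    Nat.card (ConnectedComponents {p // H p ≠ 0}) = 2 := by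
  have transfer {S : Set ℝ} (hS : IsPathConnected (modelF ⁻¹' S)) : IsConnected (H ⁻¹' S) :=
    (IsPathConnected.of_preimage_of_surjective (continuous_torusChart m ε v)
      (torusChart_surjective hm hε v)
      (by rwa [← preimage_comp, show H ∘ _ = modelF from funext hchart])).isConnected
  exact natCard_connectedComponents_ne_zero_eq_two hH (transfer isPathConnected_modelF_pos)
    (transfer isPathConnected_modelF_neg)

/-- (From Case 3 of the paper's eigenbasis of the flat 3-torus.)  For a positive
integer `m` and a sign `ε = ±1`, each of
`F(x₁,x₂,x₃) = sin(mx₁) sin(mx₂) + ε cos(mx₁) sin(mx₃)` and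
`G(x₁,x₂,x₃) = cos(mx₁) cos(mx₂) + ε cos(mx₃) sin(mx₁)` on `T³`
has exactly two nodal domains. -/
theorem stmt10 (m : ℕ) (hm : 0 < m) (ε : ℝ) (hε : ε = 1 ∨ ε = -1) :
    Nat.card (ConnectedComponents
      {p : T3 // sinT m p.1 * sinT m p.2.1 + ε * (cosT m p.1 * sinT m p.2.2) ≠ 0}) = 2 ∧
    Nat.card (ConnectedComponents
      {p : T3 // cosT m p.1 * cosT m p.2.1 + ε * (cosT m p.2.2 * sinT m p.1) ≠ 0}) = 2 := by
  have hm0 : (m : ℝ) ≠ 0 := by positivity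
  refine ⟨natCard_connectedComponents_of_comp_torusChart hm0 hε 0 (by fun_prop) fun y => ?_,
    natCard_connectedComponents_of_comp_torusChart hm0 hε (π / 2, π / 2, -(π / 2)) (by fun_prop)
      fun y => ?_⟩
  · simp only [torusChart, sinT_coe_div hm0, cosT_coe_div hm0, Prod.fst_zero, Prod.snd_zero,
      sub_zero, modelF]
    linear_combination (cos y.1) * mul_sin_mul_self hε y.2.2
  · simp only [torusChart, sinT_coe_div hm0, cosT_coe_div hm0, sub_neg_eq_add,
      cos_sub_pi_div_two, sin_sub_pi_div_two, cos_add_pi_div_two, modelF]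
    linear_combination (cos y.1) * mul_sin_mul_self hε y.2.2
end
end
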